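/- Let a and b be n×n positive definite complex matrices with Tr a = Tr b, let t = ‖b − a‖₁/2, and suppose a ≥ γ·I for a scalar γ ≥ 0. Then ∫₀^∞ (b + s·I)⁻¹ (b − a) (b + s·I)⁻¹ ds ≤ (t/(γ + t))·I in the positive semidefinite (Loewner) order. -/

import Mathlib

open Matrix MeasureTheory
open scoped ComplexOrder

/-- Matrix logarithm on the support: apply `Real.log` (which is `0` at `0`) to the
eigenvalues of a Hermitian matrix via functional calculus; junk value `0` otherwise. -/
noncomputable def mlog {n : Type*} [Fintype n] [DecidableEq n] (A : Matrix n n ℂ) :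
    Matrix n n ℂ :=
  if hA : A.IsHermitian then hA.cfc Real.log else 0

/-- Quantum relative entropy `S(A‖B) = Tr A (log A - log B)`. -/
noncomputable def qRelEnt {n : Type*} [Fintype n] [DecidableEq n] (A B : Matrix n n ℂ) : ℝ :=
  ((A * (mlog A - mlog B)).trace).re

namespace Matrix.PosSemidef

/-- Square root of a positive semidefinite matrix (as in the older Mathlib). -/
noncomputable def sqrt {n : Type*} [Fintype n] [DecidableEq n] {𝕜 : Type*} [RCLike 𝕜]
    {A : Matrix n n 𝕜} (hA : A.PosSemidef) : Matrix n n 𝕜 :=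
  hA.1.eigenvectorUnitary.1 * diagonal ((↑) ∘ (√·) ∘ hA.1.eigenvalues) *
    (star hA.1.eigenvectorUnitary : Matrix n n 𝕜)

lemma posSemidef_sqrt {n : Type*} [Fintype n] [DecidableEq n] {𝕜 : Type*} [RCLike 𝕜]
    {A : Matrix n n 𝕜} (hA : A.PosSemidef) : PosSemidef hA.sqrt := by
  apply PosSemidef.mul_mul_conjTranspose_same
  refine posSemidef_diagonal_iff.mpr fun i ↦ ?_
  rw [Function.comp_apply, RCLike.nonneg_iff]
  constructor
  · simp only [Function.comp_apply, RCLike.ofReal_re]; exact Real.sqrt_nonneg _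
  · simp only [Function.comp_apply, RCLike.ofReal_im]

end Matrix.PosSemidef

/-- Trace norm `‖X‖₁ = Tr √(Xᴴ X)`. -/
noncomputable def traceNorm {n : Type*} [Fintype n] [DecidableEq n] (X : Matrix n n ℂ) : ℝ :=
  ((Matrix.posSemidef_conjTranspose_mul_self X).sqrt.trace).re

/-- Smallest eigenvalue of a Hermitian matrix (junk value `0` otherwise). -/
noncomputable def lamMin {n : Type*} [Fintype n] [DecidableEq n] (A : Matrix n n ℂ) : ℝ :=
  if hA : A.IsHermitian then ⨅ i, hA.eigenvalues i else 0

/-- Largest eigenvalue of a Hermitian matrix (junk value `0` otherwise). -/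
noncomputable def lamMax {n : Type*} [Fintype n] [DecidableEq n] (A : Matrix n n ℂ) : ℝ :=
  if hA : A.IsHermitian then ⨆ i, hA.eigenvalues i else 0

/-- Operator norm: largest eigenvalue of `√(Xᴴ X)` (largest singular value). -/
noncomputable def opNorm {n : Type*} [Fintype n] [DecidableEq n] (X : Matrix n n ℂ) : ℝ :=
  ⨆ i, (Matrix.posSemidef_conjTranspose_mul_self X).posSemidef_sqrt.1.eigenvalues i


/-!
Write `R s = (b + s)⁻¹` and `Δ = b - a`. Since `Tr Δ = 0`, every eigenvalue of `Δ` is at most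
`‖Δ‖₁ / 2 = t`, so `Δ ≤ t`; and `Δ ≤ b - γ` because `a ≥ γ`. Conjugating by the self-adjoint
`R s` and integrating gives `M ≤ t • P` and `M ≤ 1 - γ • P` for `M = ∫ R Δ R` and `P = ∫ R²`,
using `∫ R b R = 1` (in the eigenbasis of `b` this is `∫₀^∞ d / (d + s)² ds = 1`). Eliminating
`P` gives `(γ + t) • M ≤ γ • t • P + t • (1 - γ • P) = t • 1`.
-/

-- The L2 operator norm makes `Matrix n n ℂ` a C⋆-algebra, so that Bochner integrals of matrices
-- are monotone for the Loewner order.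
open scoped MatrixOrder Matrix.Norms.L2Operator
open Set Filter Topology

section ScalarIntegrals

variable {d e : ℝ}

lemma hasDerivAt_neg_inv_add {x : ℝ} (h : d + x ≠ 0) :
    HasDerivAt (fun s => -(d + s)⁻¹) ((d + x) ^ 2)⁻¹ x := by
  simpa [neg_div] using (((hasDerivAt_id' x).const_add d).fun_inv h).fun_neg

lemma tendsto_neg_inv_add_atTop : Tendsto (fun s : ℝ => -(d + s)⁻¹) atTop (𝓝 0) := by
  simpa using (tendsto_atTop_add_const_left _ d tendsto_id).inv_tendsto_atTop.neg

lemma integrableOn_Ioi_inv_add_sq (hd : 0 < d) :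
    IntegrableOn (fun s => ((d + s) ^ 2)⁻¹) (Ioi 0) :=
  integrableOn_Ioi_deriv_of_nonneg (by fun_prop (disch := positivity))
    (fun x hx => hasDerivAt_neg_inv_add (by linarith [mem_Ioi.mp hx]))
    (fun _ _ => by positivity) tendsto_neg_inv_add_atTop

lemma integral_Ioi_inv_add_sq (hd : 0 < d) : ∫ s in Ioi 0, ((d + s) ^ 2)⁻¹ = d⁻¹ := by
  rw [integral_Ioi_of_hasDerivAt_of_tendsto (by fun_prop (disch := positivity))
    (fun x hx => hasDerivAt_neg_inv_add (by linarith [mem_Ioi.mp hx]))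
    (integrableOn_Ioi_inv_add_sq hd) tendsto_neg_inv_add_atTop]
  simp

lemma integrableOn_Ioi_inv_add_mul_inv_add (hd : 0 < d) (he : 0 < e) :
    IntegrableOn (fun s => (d + s)⁻¹ * (e + s)⁻¹) (Ioi 0) := by
  have hm : 0 < min d e := lt_min hd he
  refine (integrableOn_Ioi_inv_add_sq hm).mono' (by fun_prop (disch := positivity)) ?_
  filter_upwards [ae_restrict_mem measurableSet_Ioi] with s hs
  have hs : 0 < s := hs
  rw [Real.norm_of_nonneg (by positivity), sq, mul_inv]
  gcongr <;> simp

end ScalarIntegrals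

lemma two_mul_le_sum_abs_of_sum_eq_zero {ι : Type*} [Fintype ι] {f : ι → ℝ}
    (hf : ∑ i, f i = 0) (i : ι) : 2 * f i ≤ ∑ j, |f j| := by
  have hle : |f i| + f i ≤ ∑ j, (|f j| + f j) :=
    Finset.single_le_sum (f := fun j => |f j| + f j)
      (fun j _ => by linarith [neg_abs_le (f j)]) (Finset.mem_univ i)
  rw [Finset.sum_add_distrib, hf, add_zero] at hle
  linarith [le_abs_self (f i)]

lemma le_div_add_smul_of_le_smul_of_le_sub_smul {E : Type*} [AddCommGroup E] [PartialOrder E]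
    [IsOrderedAddMonoid E] [Module ℝ E] [PosSMulMono ℝ E] {x y z : E} {γ t : ℝ}
    (hγ : 0 ≤ γ) (ht : 0 ≤ t) (h₁ : x ≤ t • y) (h₂ : x ≤ z - γ • y) :
    x ≤ (t / (γ + t)) • z := by
  rcases (add_nonneg hγ ht).eq_or_lt with hγt | hγt
  · obtain rfl : t = 0 := by linarith
    simpa using h₁
  have key : (γ + t) • x ≤ t • z :=
    calc (γ + t) • x = γ • x + t • x := add_smul _ _ _
      _ ≤ γ • (t • y) + t • (z - γ • y) :=
        add_le_add (smul_le_smul_of_nonneg_left h₁ hγ) (smul_le_smul_of_nonneg_left h₂ ht)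
      _ = t • z := by module
  rwa [div_eq_inv_mul, mul_smul, le_inv_smul_iff_of_pos hγt]

namespace Matrix

variable {n : Type*} [Fintype n] [DecidableEq n]

section Integral

variable {α : Type*} [MeasurableSpace α] {μ : Measure α}

lemma integrable_iff_integrable_apply {F : α → Matrix n n ℂ} :
    Integrable F μ ↔ ∀ i j, Integrable (fun x => F x i j) μ := by
  rw [← (ofLinearEquiv ℂ).symm.toContinuousLinearEquiv.integrable_comp_iff]
  simp only [integrable_pi_iff]
  rfl

lemma of_integral_apply {F : α → Matrix n n ℂ} (hF : Integrable F μ) :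
    of (fun i j => ∫ x, F x i j ∂μ) = ∫ x, F x ∂μ := by
  ext i j
  exact (entryLinearMap ℂ ℂ i j).toContinuousLinearMap.integral_comp_comm hF

lemma integral_diagonal {f : α → n → ℂ} (hf : ∀ i, Integrable (fun x => f x i) μ) :
    ∫ x, diagonal (f x) ∂μ = diagonal fun i => ∫ x, f x i ∂μ := by
  rw [← funext (eval_integral hf)]
  exact (diagonalLinearMap n ℂ ℂ).toContinuousLinearMap.integral_comp_comm (.of_eval hf)

lemma integrable_conjStarAlgAut_iff (U : unitary (Matrix n n ℂ)) {F : α → Matrix n n ℂ} :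
    Integrable (fun x => Unitary.conjStarAlgAut ℂ _ U (F x)) μ ↔ Integrable F μ :=
  ContinuousLinearEquiv.integrable_comp_iff
    (Unitary.conjStarAlgAut ℂ _ U).toAlgEquiv.toLinearEquiv.toContinuousLinearEquiv

lemma integral_conjStarAlgAut (U : unitary (Matrix n n ℂ)) (F : α → Matrix n n ℂ) :
    ∫ x, Unitary.conjStarAlgAut ℂ _ U (F x) ∂μ = Unitary.conjStarAlgAut ℂ _ U (∫ x, F x ∂μ) :=
  ContinuousLinearEquiv.integral_comp_comm
    (Unitary.conjStarAlgAut ℂ _ U).toAlgEquiv.toLinearEquiv.toContinuousLinearEquiv F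

end Integral

section TraceNorm

lemma PosSemidef.sqrt_eq_cfcSqrt {A : Matrix n n ℂ} (hA : A.PosSemidef) :
    hA.sqrt = CFC.sqrt A := by
  rw [CFC.sqrt_eq_real_sqrt A hA.nonneg, cfcₙ_eq_cfc, hA.1.cfc_eq, IsHermitian.cfc,
    Unitary.conjStarAlgAut_apply, PosSemidef.sqrt]

lemma traceNorm_eq_re_trace_abs (X : Matrix n n ℂ) : traceNorm X = (CFC.abs X).trace.re := by
  rw [traceNorm, PosSemidef.sqrt_eq_cfcSqrt, CFC.abs, star_eq_conjTranspose]

lemma traceNorm_nonneg (X : Matrix n n ℂ) : 0 ≤ traceNorm X :=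
  (Complex.nonneg_iff.mp (posSemidef_conjTranspose_mul_self X).posSemidef_sqrt.trace_nonneg).1

lemma trace_conjStarAlgAut (U : unitary (Matrix n n ℂ)) (A : Matrix n n ℂ) :
    (Unitary.conjStarAlgAut ℂ _ U A).trace = A.trace := by
  rw [Unitary.conjStarAlgAut_apply, trace_mul_cycle, Unitary.coe_star_mul_self, one_mul]

lemma IsHermitian.traceNorm_eq_sum_abs_eigenvalues {A : Matrix n n ℂ} (hA : A.IsHermitian) :
    traceNorm A = ∑ i, |hA.eigenvalues i| := by
  rw [traceNorm_eq_re_trace_abs, CFC.abs_eq_cfc_norm A hA.isSelfAdjoint, hA.cfc_eq,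
    IsHermitian.cfc, trace_conjStarAlgAut, trace_diagonal]
  simp

lemma IsHermitian.le_smul_one_of_eigenvalues_le {A : Matrix n n ℂ} (hA : A.IsHermitian) {r : ℝ}
    (h : ∀ i, hA.eigenvalues i ≤ r) : A ≤ r • 1 := by
  rw [← Algebra.algebraMap_eq_smul_one]
  refine le_algebraMap_of_spectrum_le (fun x hx => ?_) hA.isSelfAdjoint
  obtain ⟨i, rfl⟩ := hA.spectrum_real_eq_range_eigenvalues ▸ hx
  exact h i

lemma IsHermitian.le_half_traceNorm_smul_one {A : Matrix n n ℂ} (hA : A.IsHermitian)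
    (htr : A.trace = 0) : A ≤ (traceNorm A / 2) • 1 := by
  have hsum : ∑ i, hA.eigenvalues i = 0 := by
    have h := hA.trace_eq_sum_eigenvalues
    rw [htr] at h
    exact RCLike.ofReal_eq_zero.mp (by exact_mod_cast h.symm)
  refine hA.le_smul_one_of_eigenvalues_le fun i => ?_
  rw [hA.traceNorm_eq_sum_abs_eigenvalues]
  linarith [two_mul_le_sum_abs_of_sum_eq_zero hsum i]

end TraceNorm

section Resolvent

variable {b : Matrix n n ℂ}

lemma IsHermitian.inv_add_smul_one_eq_cfc (hb : b.IsHermitian) {s : ℝ}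
    (hs : ∀ x ∈ spectrum ℝ b, x + s ≠ 0) :
    (b + (s : ℂ) • 1)⁻¹ = cfc (fun x => (x + s)⁻¹) b := by
  rw [cfc_inv (· + s) b hs, cfc_add_const s (fun x => x) b, cfc_id' ℝ b,
    Algebra.algebraMap_eq_smul_one, nonsing_inv_eq_ringInverse, Complex.coe_smul]

lemma PosDef.resolvent_mul_mul_resolvent_eq (hb : b.PosDef) {s : ℝ} (hs : 0 ≤ s)
    (X : Matrix n n ℂ) :
    (b + (s : ℂ) • 1)⁻¹ * X * (b + (s : ℂ) • 1)⁻¹ =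
      Unitary.conjStarAlgAut ℂ _ hb.isHermitian.eigenvectorUnitary (of fun k l =>
        (Unitary.conjStarAlgAut ℂ _ hb.isHermitian.eigenvectorUnitary).symm X k l *
          (((hb.isHermitian.eigenvalues k + s)⁻¹ *
            (hb.isHermitian.eigenvalues l + s)⁻¹ : ℝ) : ℂ)) := by
  have hspec : ∀ x ∈ spectrum ℝ b, x + s ≠ 0 := by
    intro x hx
    obtain ⟨i, rfl⟩ := hb.isHermitian.spectrum_real_eq_range_eigenvalues ▸ hx
    linarith [hb.eigenvalues_pos i]
  set φ := Unitary.conjStarAlgAut ℂ _ hb.isHermitian.eigenvectorUnitary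
  rw [hb.isHermitian.inv_add_smul_one_eq_cfc hspec, hb.isHermitian.cfc_eq, IsHermitian.cfc]
  conv_lhs => rw [← φ.apply_symm_apply X]
  rw [← map_mul, ← map_mul]
  congr 1
  ext k l
  simp only [mul_diagonal, diagonal_mul, of_apply, Function.comp_apply, Complex.coe_algebraMap,
    Complex.ofReal_mul, Complex.ofReal_inv, Complex.ofReal_add]
  ring

lemma PosDef.integrableOn_resolvent_mul_mul_resolvent (hb : b.PosDef) (X : Matrix n n ℂ) :
    IntegrableOn (fun s : ℝ => (b + (s : ℂ) • 1)⁻¹ * X * (b + (s : ℂ) • 1)⁻¹) (Ioi 0) := by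
  refine (integrableOn_congr_fun (fun s hs => (hb.resolvent_mul_mul_resolvent_eq
    (le_of_lt hs) X).symm) measurableSet_Ioi).mp ?_
  refine (integrable_conjStarAlgAut_iff _).mpr (integrable_iff_integrable_apply.mpr fun k l => ?_)
  exact ((integrableOn_Ioi_inv_add_mul_inv_add (hb.eigenvalues_pos k)
    (hb.eigenvalues_pos l)).ofReal).const_mul _

lemma PosDef.integral_resolvent_mul_self_mul_resolvent (hb : b.PosDef) :
    ∫ s in Ioi (0 : ℝ), (b + (s : ℂ) • 1)⁻¹ * b * (b + (s : ℂ) • 1)⁻¹ = 1 := by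
  set U := hb.isHermitian.eigenvectorUnitary
  set d := hb.isHermitian.eigenvalues
  set g : ℝ → n → ℂ := fun s k => ((d k * ((d k + s) ^ 2)⁻¹ : ℝ) : ℂ)
  have hdiag : (Unitary.conjStarAlgAut ℂ _ U).symm b = diagonal (RCLike.ofReal ∘ d) := by
    rw [Unitary.conjStarAlgAut_symm]
    exact hb.isHermitian.conjStarAlgAut_star_eigenvectorUnitary
  have hkernel : ∀ s ∈ Ioi (0 : ℝ), (b + (s : ℂ) • 1)⁻¹ * b * (b + (s : ℂ) • 1)⁻¹ =
      Unitary.conjStarAlgAut ℂ _ U (diagonal (g s)) := by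
    intro s hs
    rw [hb.resolvent_mul_mul_resolvent_eq (le_of_lt hs), hdiag]
    congr 1
    ext k l
    by_cases hkl : k = l
    · subst hkl; simp [g, d, sq]
    · simp [hkl]
  have hg : ∀ k, IntegrableOn (fun s => g s k) (Ioi 0) := fun k =>
    ((integrableOn_Ioi_inv_add_sq (hb.eigenvalues_pos k)).const_mul _).ofReal
  have hg₁ : ∀ k, ∫ s in Ioi (0 : ℝ), g s k = 1 := fun k => by
    rw [integral_complex_ofReal, integral_const_mul, integral_Ioi_inv_add_sq (hb.eigenvalues_pos k),
      mul_inv_cancel₀ (hb.eigenvalues_pos k).ne', Complex.ofReal_one]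
  rw [setIntegral_congr_fun measurableSet_Ioi hkernel, integral_conjStarAlgAut,
    integral_diagonal hg]
  simp only [hg₁, diagonal_one, map_one]

end Resolvent

end Matrix

/-- If `a ≥ γ·I` then `𝒯_b(b - a) ≤ (t/(γ+t))·I` in the Loewner order, where
`t = ‖b - a‖₁ / 2` and the integral is taken entrywise. -/
theorem integral_resolvent_sub_le {n : Type*} [Fintype n] [DecidableEq n]
    (a b : Matrix n n ℂ) (ha : a.PosDef) (hb : b.PosDef)
    (htr : a.trace = b.trace)
    (γ t : ℝ) (hγ : 0 ≤ γ) (haγ : (a - γ • (1 : Matrix n n ℂ)).PosSemidef)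
    (ht : t = traceNorm (b - a) / 2) :
    ((t / (γ + t)) • (1 : Matrix n n ℂ) -
      Matrix.of (fun i j => ∫ s in Set.Ioi (0 : ℝ),
        ((b + (s : ℂ) • 1)⁻¹ * (b - a) * (b + (s : ℂ) • 1)⁻¹) i j)).PosSemidef := by
  set R : ℝ → Matrix n n ℂ := fun s => (b + (s : ℂ) • 1)⁻¹
  have hInt := hb.integrableOn_resolvent_mul_mul_resolvent
  have hInt₁ : IntegrableOn (fun s => R s * R s) (Ioi 0) := by simpa only [mul_one] using hInt 1
  have hInt₁γ : IntegrableOn (fun s => γ • (R s * R s)) (Ioi 0) := hInt₁.smul γ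
  have hR : ∀ s, IsSelfAdjoint (R s) := fun s =>
    IsHermitian.inv (hb.isHermitian.add (by simp [IsHermitian, conjTranspose_smul]))
  have ht₀ : 0 ≤ t := ht ▸ div_nonneg (traceNorm_nonneg _) zero_le_two
  have hΔ : b - a ≤ t • 1 := ht ▸ (hb.isHermitian.sub ha.isHermitian).le_half_traceNorm_smul_one
    (by rw [trace_sub, htr, sub_self])
  rw [Matrix.of_integral_apply (hInt _), ← Matrix.le_iff]
  refine le_div_add_smul_of_le_smul_of_le_sub_smul hγ ht₀ (y := ∫ s in Ioi (0 : ℝ), R s * R s)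
    ?_ ?_
  · rw [← integral_smul]
    refine setIntegral_mono_on (hInt _) (hInt₁.smul t) measurableSet_Ioi fun s _ => ?_
    simpa only [mul_smul_comm, mul_one, smul_mul_assoc] using (hR s).conjugate_le_conjugate hΔ
  · calc ∫ s in Ioi (0 : ℝ), R s * (b - a) * R s
        ≤ ∫ s in Ioi (0 : ℝ), (R s * b * R s - γ • (R s * R s)) :=
          setIntegral_mono_on (hInt _) ((hInt b).sub hInt₁γ) measurableSet_Ioi fun s _ => by
            simpa [mul_sub, sub_mul] using (hR s).conjugate_le_conjugate (sub_le_sub_left haγ b)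
      _ = 1 - γ • ∫ s in Ioi (0 : ℝ), R s * R s := by
          rw [integral_sub (hInt b) hInt₁γ, integral_smul,
            hb.integral_resolvent_mul_self_mul_resolvent]
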